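/- arXiv:2001.01342 — 2 statements merged into one kernel-verified Lean document; each statement's English description precedes it below -/
import Mathlib

section
/- For 0 < x ≤ 1 and v ∈ [-1,0], it holds that M_v(x) ≤ ((1-v) + vx)/x^v ≤ m_v(x), where M_v(x) = 1 + v(1-v)(x-1)²/(2x^{v+1}) and m_v(x) = 1 + 2^v v(1-v)(x-1)²/(x+1)^{v+1}. -/
open Real Set intervalIntegral
lemma bern_neg {t p : ℝ} (ht : -1 < t) (hp1 : -1 ≤ p) (hp0 : p ≤ 0) :
    1 + p * t ≤ (1 + t) ^ p := by
  have h1t : (0:ℝ) < 1 + t := by linarith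
  have hb : (1 + t) ^ (-p) ≤ 1 + (-p) * t :=
    rpow_one_add_le_one_add_mul_self ht.le (by linarith) (by linarith)
  have hpos : 0 < 1 + (-p) * t := by
    rcases le_or_gt 0 t with h | h
    · nlinarith
    · nlinarith
  have hrp : 0 < (1 + t) ^ (-p) := rpow_pos_of_pos h1t _
  have h2 : (1 + t) ^ p = ((1 + t) ^ (-p))⁻¹ := by
    rw [← Real.rpow_neg h1t.le, neg_neg]
  rw [h2]
  have h3 : (1 + (-p) * t)⁻¹ ≤ ((1 + t) ^ (-p))⁻¹ := by gcongr
  refine le_trans ?_ h3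
  have h4 : (1 + p*t) * (1 + (-p)*t) ≤ 1 := by nlinarith [sq_nonneg (p*t)]
  have h5 : (1 + (-p)*t) * (1 + (-p)*t)⁻¹ = 1 := mul_inv_cancel₀ hpos.ne'
  nlinarith [mul_le_mul_of_nonneg_right h4 (inv_pos.mpr hpos).le, h5]
lemma tangent_line {s A μ : ℝ} (hs : 0 < s) (hA : 0 < A) (hμ1 : -1 ≤ μ) (hμ0 : μ ≤ 0) :
    A ^ μ + μ * A ^ (μ - 1) * (s - A) ≤ s ^ μ := by
  have ht : -1 < s / A - 1 := by
    have : 0 < s / A := div_pos hs hA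
    linarith
  have hb := bern_neg ht hμ1 hμ0
  have h1 : (1:ℝ) + (s / A - 1) = s / A := by ring
  rw [h1] at hb
  have hdiv : (s / A) ^ μ = s ^ μ / A ^ μ := Real.div_rpow hs.le hA.le μ
  have hAμ : 0 < A ^ μ := rpow_pos_of_pos hA μ
  have h3 : A ^ (μ - 1) = A ^ μ / A := by
    rw [Real.rpow_sub hA, Real.rpow_one]
  have key := mul_le_mul_of_nonneg_left hb hAμ.le
  rw [hdiv, mul_div_cancel₀ _ hAμ.ne'] at key
  calc A ^ μ + μ * A ^ (μ - 1) * (s - A) = A ^ μ * (1 + μ * (s / A - 1)) := by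
        rw [h3]; field_simp
    _ ≤ s ^ μ := key
lemma gInt {x v : ℝ} (hx : 0 < x) (hx1 : x ≤ 1) (hv0 : v < 0) (hv1 : v < 1) :
    x ^ v - 1 - v * (x - 1)
      = v * (v - 1) * x ^ v * ∫ s in x..1, (1 - s) * s ^ (-v - 1) := by
  have huIcc : uIcc x 1 = Icc x 1 := uIcc_of_le hx1
  have hvne : -v ≠ 0 := by linarith
  have h1vne : 1 - v ≠ 0 := by linarith
  set F : ℝ → ℝ := fun s => s ^ (-v) / (-v) - s ^ (1 - v) / (1 - v) with hF
  have hder : ∀ s ∈ uIcc x 1, HasDerivAt F ((1 - s) * s ^ (-v - 1)) s := by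
    intro s hs
    rw [huIcc] at hs
    have hs0 : 0 < s := lt_of_lt_of_le hx hs.1
    have h1 : HasDerivAt (fun s : ℝ => s ^ (-v)) (-v * s ^ (-v - 1)) s :=
      Real.hasDerivAt_rpow_const (Or.inl hs0.ne')
    have h2 : HasDerivAt (fun s : ℝ => s ^ (1 - v)) ((1 - v) * s ^ (1 - v - 1)) s :=
      Real.hasDerivAt_rpow_const (Or.inl hs0.ne')
    have h3 := (h1.div_const (-v)).sub (h2.div_const (1 - v))
    refine h3.congr_deriv ?_
    rw [mul_div_cancel_left₀ _ hvne, mul_div_cancel_left₀ _ h1vne,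
      show (1:ℝ) - v - 1 = -v by ring, show -v = -v - 1 + 1 by ring,
      Real.rpow_add_one hs0.ne']
    ring
  have hcont : ContinuousOn (fun s : ℝ => (1 - s) * s ^ (-v - 1)) (uIcc x 1) := by
    apply ContinuousOn.mul ((continuous_const.sub continuous_id).continuousOn)
    apply ContinuousOn.rpow_const continuousOn_id
    intro s hs
    rw [huIcc] at hs
    exact Or.inl (ne_of_gt (lt_of_lt_of_le hx hs.1))
  have hint := integral_eq_sub_of_hasDerivAt hder hcont.intervalIntegrable
  have c1 : ∀ y : ℝ, v * (v - 1) * (y / (-v)) = (1 - v) * y := by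
    intro y; have : v ≠ 0 := hv0.ne; field_simp; ring
  have c2 : ∀ y : ℝ, v * (v - 1) * (y / (1 - v)) = -v * y := by
    intro y; field_simp; ring
  have key : v * (v - 1) * (F 1 - F x)
      = (1 - v) * (1 - x ^ (-v)) + v * (1 - x ^ (1 - v)) := by
    simp only [hF, Real.one_rpow]
    linear_combination c1 1 - c2 1 - c1 (x ^ (-v)) + c2 (x ^ (1 - v))
  have e1 : x ^ v * x ^ (-v) = 1 := by
    rw [← Real.rpow_add hx, add_neg_cancel, Real.rpow_zero]
  have e2 : x ^ v * x ^ (1 - v) = x := by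
    rw [← Real.rpow_add hx, show v + (1 - v) = 1 by ring, Real.rpow_one]
  rw [hint]
  linear_combination (-(x ^ v)) * key + (1 - v) * e1 + v * e2
lemma keyL {x v : ℝ} (hx : 0 < x) (hx1 : x ≤ 1) (hv1 : -1 ≤ v) (hv0 : v < 0) :
    2 * x * (x ^ v - 1 - v * (x - 1)) ≤ v * (v - 1) * (x - 1) ^ 2 := by
  have huIcc : uIcc x 1 = Icc x 1 := uIcc_of_le hx1
  have hcont : ContinuousOn (fun s : ℝ => (1 - s) * s ^ (-v - 1)) (uIcc x 1) := by
    apply ContinuousOn.mul ((continuous_const.sub continuous_id).continuousOn)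
    apply ContinuousOn.rpow_const continuousOn_id
    intro s hs
    rw [huIcc] at hs
    exact Or.inl (ne_of_gt (lt_of_lt_of_le hx hs.1))
  -- the constant-bound integral
  have hpoly : ∀ s : ℝ, HasDerivAt (fun s : ℝ => (s - s ^ 2 / 2) * x ^ (-v - 1))
      ((1 - s) * x ^ (-v - 1)) s := by
    intro s
    have h := ((hasDerivAt_id s).sub ((hasDerivAt_pow 2 s).div_const 2)).mul_const
      (x ^ (-v - 1))
    refine h.congr_deriv ?_
    push_cast
    ring
  have hIconst : ∫ s in x..1, (1 - s) * x ^ (-v - 1)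
      = x ^ (-v - 1) * ((1 - x) ^ 2 / 2) := by
    rw [integral_eq_sub_of_hasDerivAt (fun s _ => hpoly s)
      (((continuous_const.sub continuous_id).mul continuous_const).continuousOn.intervalIntegrable)]
    ring
  have hmono : ∫ s in x..1, (1 - s) * s ^ (-v - 1) ≤ ∫ s in x..1, (1 - s) * x ^ (-v - 1) := by
    apply integral_mono_on hx1 (hcont.intervalIntegrable)
      (((continuous_const.sub continuous_id).mul continuous_const).continuousOn.intervalIntegrable)
    intro s hs
    have h1 : s ^ (-v - 1) ≤ x ^ (-v - 1) :=
      Real.rpow_le_rpow_of_nonpos hx hs.1 (by linarith)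
    have h2 : 0 ≤ 1 - s := by linarith [hs.2]
    exact mul_le_mul_of_nonneg_left h1 h2
  have hco : 0 ≤ v * (v - 1) * x ^ v := by
    have h := rpow_pos_of_pos hx v
    have hvv : 0 < v * (v - 1) := mul_pos_of_neg_of_neg hv0 (by linarith)
    exact (mul_pos hvv h).le
  have h1 := mul_le_mul_of_nonneg_left (le_trans hmono (le_of_eq hIconst)) hco
  have e : x ^ v * x ^ (-v - 1) = x⁻¹ := by
    rw [← Real.rpow_add hx, show v + (-v - 1) = -1 by ring, Real.rpow_neg_one]
  have hxinv : x * x⁻¹ = 1 := mul_inv_cancel₀ hx.ne'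
  have h2 := mul_le_mul_of_nonneg_left h1 (by linarith : (0:ℝ) ≤ 2 * x)
  rw [gInt hx hx1 hv0 (by linarith)]
  calc 2 * x * (v * (v - 1) * x ^ v * ∫ s in x..1, (1 - s) * s ^ (-v - 1))
      ≤ 2 * x * (v * (v - 1) * x ^ v * (x ^ (-v - 1) * ((1 - x) ^ 2 / 2))) := by linarith
    _ = v * (v - 1) * (x - 1) ^ 2 := by
        linear_combination (v * (v - 1) * (1 - x) ^ 2 * x) * e
          + (v * (v - 1) * (1 - x) ^ 2) * hxinv
lemma keyR {x v : ℝ} (hx : 0 < x) (hx1 : x ≤ 1) (hv1 : -1 ≤ v) (hv0 : v < 0) :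
    v * (v - 1) * (x - 1) ^ 2 * 2 ^ v * x ^ v
      ≤ (x ^ v - 1 - v * (x - 1)) * (x + 1) ^ (v + 1) := by
  have huIcc : uIcc x 1 = Icc x 1 := uIcc_of_le hx1
  have hA : (0:ℝ) < (x + 1) / 2 := by linarith
  set μ : ℝ := -v - 1 with hμ
  set A : ℝ := (x + 1) / 2 with hAdef
  have hμ1 : -1 ≤ μ := by rw [hμ]; linarith
  have hμ0 : μ ≤ 0 := by rw [hμ]; linarith
  set c1 : ℝ := A ^ μ with hc1
  set c2 : ℝ := A ^ (μ - 1) with hc2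
  set b : ℝ := μ * c2 with hb
  set a : ℝ := c1 - b * A with ha
  have hc2pos : 0 < c2 := rpow_pos_of_pos hA _
  have hc1pos : 0 < c1 := rpow_pos_of_pos hA _
  have hbnp : b ≤ 0 := mul_nonpos_of_nonpos_of_nonneg hμ0 hc2pos.le
  have hcont : ContinuousOn (fun s : ℝ => (1 - s) * s ^ μ) (uIcc x 1) := by
    apply ContinuousOn.mul ((continuous_const.sub continuous_id).continuousOn)
    apply ContinuousOn.rpow_const continuousOn_id
    intro s hs
    rw [huIcc] at hs
    exact Or.inl (ne_of_gt (lt_of_lt_of_le hx hs.1))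
  -- polynomial integral
  have hpoly : ∀ s : ℝ, HasDerivAt (fun s : ℝ => a * s + (b - a) * s ^ 2 / 2 - b * s ^ 3 / 3)
      ((1 - s) * (a + b * s)) s := by
    intro s
    have h := (((hasDerivAt_id s).const_mul a).add
      (((hasDerivAt_pow 2 s).const_mul (b - a)).div_const 2)).sub
      (((hasDerivAt_pow 3 s).const_mul b).div_const 3)
    refine h.congr_deriv ?_
    push_cast
    ring
  have hIpoly : ∫ s in x..1, (1 - s) * (a + b * s)
      = (a * 1 + (b - a) * 1 ^ 2 / 2 - b * 1 ^ 3 / 3)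
        - (a * x + (b - a) * x ^ 2 / 2 - b * x ^ 3 / 3) := by
    apply integral_eq_sub_of_hasDerivAt (fun s _ => hpoly s)
    apply ContinuousOn.intervalIntegrable
    exact ((continuous_const.sub continuous_id).mul
      (continuous_const.add (continuous_const.mul continuous_id))).continuousOn
  have hmono : ∫ s in x..1, (1 - s) * (a + b * s) ≤ ∫ s in x..1, (1 - s) * s ^ μ := by
    apply integral_mono_on hx1 _ hcont.intervalIntegrable
    · intro s hs
      have hs0 : 0 < s := lt_of_lt_of_le hx hs.1
      have ht := tangent_line hs0 hA hμ1 hμ0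
      have h2 : 0 ≤ 1 - s := by linarith [hs.2]
      have h3 : a + b * s = A ^ μ + μ * A ^ (μ - 1) * (s - A) := by
        rw [ha, hb, hc1, hc2]; ring
      rw [h3]
      exact mul_le_mul_of_nonneg_left ht h2
    · apply ContinuousOn.intervalIntegrable
      exact ((continuous_const.sub continuous_id).mul
        (continuous_const.add (continuous_const.mul continuous_id))).continuousOn
  -- lower bound for polynomial integral value
  have hval : c1 * ((1 - x) ^ 2 / 2)
      ≤ (a * 1 + (b - a) * 1 ^ 2 / 2 - b * 1 ^ 3 / 3)
        - (a * x + (b - a) * x ^ 2 / 2 - b * x ^ 3 / 3) := by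
    have hid : (a * 1 + (b - a) * 1 ^ 2 / 2 - b * 1 ^ 3 / 3)
        - (a * x + (b - a) * x ^ 2 / 2 - b * x ^ 3 / 3)
        - c1 * ((1 - x) ^ 2 / 2) = -b * (1 - x) ^ 3 / 12 := by
      rw [ha, hAdef]; ring
    nlinarith [pow_nonneg (by linarith : (0:ℝ) ≤ 1 - x) 3]
  have hJ : c1 * ((1 - x) ^ 2 / 2) ≤ ∫ s in x..1, (1 - s) * s ^ μ :=
    le_trans (le_trans hval (le_of_eq hIpoly.symm)) hmono
  have hco : 0 ≤ v * (v - 1) * x ^ v := by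
    have h := rpow_pos_of_pos hx v
    have hvv : 0 < v * (v - 1) := mul_pos_of_neg_of_neg hv0 (by linarith)
    exact (mul_pos hvv h).le
  have h1 := mul_le_mul_of_nonneg_left hJ hco
  -- c1 * (x+1)^(v+1) = 2 * 2^v
  have hq : (0:ℝ) < (x + 1) ^ (v + 1) := rpow_pos_of_pos (by linarith) _
  have hc1q : c1 * (x + 1) ^ (v + 1) = 2 * 2 ^ v := by
    rw [hc1, hAdef, hμ, show -v - 1 = -(v + 1) by ring, Real.rpow_neg hA.le,
      Real.div_rpow (by linarith : (0:ℝ) ≤ x + 1) (by norm_num : (0:ℝ) ≤ 2)]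
    rw [inv_div, div_mul_cancel₀ _ hq.ne', Real.rpow_add_one (by norm_num : (2:ℝ) ≠ 0)]
    ring
  -- conclude
  have h2 := mul_le_mul_of_nonneg_right h1 hq.le
  rw [gInt hx hx1 hv0 (by linarith)]
  calc v * (v - 1) * (x - 1) ^ 2 * 2 ^ v * x ^ v
      = v * (v - 1) * x ^ v * (c1 * ((1 - x) ^ 2 / 2)) * (x + 1) ^ (v + 1) := by
        linear_combination (v * (v - 1) * x ^ v * ((1 - x) ^ 2 / 2)) * hc1q.symm
    _ ≤ v * (v - 1) * x ^ v * (∫ s in x..1, (1 - s) * s ^ μ) * (x + 1) ^ (v + 1) := h2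
    _ = (v * (v - 1) * x ^ v * ∫ s in x..1, (1 - s) * s ^ (-v - 1)) * (x + 1) ^ (v + 1) := by
        rw [hμ]

theorem stmt6 (x v : ℝ) (hx : 0 < x) (hx1 : x ≤ 1) (hv : v ∈ Set.Icc (-1:ℝ) 0) :
    1 + v * (1 - v) * (x - 1) ^ 2 / (2 * x ^ (v + 1)) ≤ ((1 - v) + v * x) / x ^ v ∧
      ((1 - v) + v * x) / x ^ v ≤ 1 + 2 ^ v * v * (1 - v) * (x - 1) ^ 2 / (x + 1) ^ (v + 1) := by
  obtain ⟨hv1, hv0⟩ := hv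
  rcases eq_or_lt_of_le hv0 with rfl | hv0'
  · norm_num [Real.rpow_zero, Real.rpow_one]
  · have hp : (0:ℝ) < x ^ v := rpow_pos_of_pos hx v
    have hq : (0:ℝ) < (x + 1) ^ (v + 1) := rpow_pos_of_pos (by linarith) _
    constructor
    · have hL := keyL hx hx1 hv1 hv0'
      rw [Real.rpow_add_one hx.ne' v]
      have h2 : (0:ℝ) < 2 * (x ^ v * x) := by positivity
      rw [show (1:ℝ) + v * (1 - v) * (x - 1) ^ 2 / (2 * (x ^ v * x))
          = (2 * (x ^ v * x) + v * (1 - v) * (x - 1) ^ 2) / (2 * (x ^ v * x)) by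
        field_simp]
      rw [div_le_div_iff₀ h2 hp]
      have h3 : 2 * (x ^ v * x) + v * (1 - v) * (x - 1) ^ 2 ≤ ((1 - v) + v * x) * (2 * x) := by
        nlinarith [hL]
      nlinarith [mul_le_mul_of_nonneg_right h3 hp.le]
    · have hR := keyR hx hx1 hv1 hv0'
      rw [show (1:ℝ) + 2 ^ v * v * (1 - v) * (x - 1) ^ 2 / (x + 1) ^ (v + 1)
          = ((x + 1) ^ (v + 1) + 2 ^ v * v * (1 - v) * (x - 1) ^ 2) / (x + 1) ^ (v + 1) by
        field_simp]
      rw [div_le_div_iff₀ hp hq]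
      nlinarith [hR]
end

section
/- Let A, B be positive invertible operators with spectra in an interval J ⊂ (0,∞), and v ∈ [-1,0) ∪ (0,1]. Then for any t ∈ J, (ln_v t)·A + (A♮_v B - t·A♮_{v-1}B) ≤ T_v(A|B). -/
set_option synthInstance.maxHeartbeats 1000000
set_option maxHeartbeats 1000000

open Real in
private lemma bern_neg_s10 {u p : ℝ} (hu : 0 < u) (hp1 : -1 ≤ p) (hp2 : p < 0) :
    1 + p * (u - 1) ≤ u ^ p := by
  have hs : (-1:ℝ) ≤ u - 1 := by linarith
  have h1 : (1 + (u - 1)) ^ (-p) ≤ 1 + (-p) * (u - 1) :=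
    rpow_one_add_le_one_add_mul_self hs (by linarith) (by linarith)
  rw [show 1 + (u - 1) = u by ring] at h1
  have hq : (0:ℝ) < u ^ (-p) := rpow_pos_of_pos hu _
  have hup : (0:ℝ) < u ^ p := rpow_pos_of_pos hu _
  have hD : 0 < 1 + (-p) * (u - 1) := hq.trans_le h1
  have hmul : u ^ p * u ^ (-p) = 1 := by
    rw [← rpow_add hu]; simp
  nlinarith [sq_nonneg ((-p) * (u - 1)), mul_le_mul_of_nonneg_left h1 hup.le]

open Real in
private lemma scalar_key {v t x : ℝ} (hv : v ∈ Set.Ico (-1:ℝ) 0 ∪ Set.Ioc (0:ℝ) 1)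
    (ht : 0 < t) (hx : 0 < x) :
    0 ≤ (v⁻¹ - 1) * x ^ v + t * x ^ (v - 1) - t ^ v / v := by
  have hvne : v ≠ 0 := by rcases hv with h | h <;> [exact h.2.ne; exact h.1.ne']
  have hu : 0 < t / x := div_pos ht hx
  have hxv : (0:ℝ) < x ^ v := rpow_pos_of_pos hx v
  have h1 : x ^ (v - 1) = x ^ v / x := by rw [rpow_sub hx, rpow_one]
  have h2 : t ^ v = (t / x) ^ v * x ^ v := by
    rw [div_rpow ht.le hx.le, div_mul_cancel₀]
    exact (rpow_pos_of_pos hx v).ne'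
  have key : 0 ≤ (1 + v * (t / x - 1) - (t / x) ^ v) / v := by
    rcases hv with h | h
    · have hb := bern_neg_s10 hu h.1 h.2
      have : 1 + v * (t / x - 1) - (t / x) ^ v ≤ 0 := by linarith
      exact div_nonneg_of_nonpos this h.2.le
    · apply div_nonneg _ h.1.le
      have hs : (-1:ℝ) ≤ t / x - 1 := by linarith
      have := rpow_one_add_le_one_add_mul_self hs h.1.le h.2
      rw [show 1 + (t / x - 1) = t / x by ring] at this
      linarith
  have expand : (v⁻¹ - 1) * x ^ v + t * x ^ (v - 1) - t ^ v / v
      = x ^ v * ((1 + v * (t / x - 1) - (t / x) ^ v) / v) := by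
    rw [h1, h2]
    field_simp
    ring
  rw [expand]
  exact mul_nonneg hxv.le key

variable {H : Type*} [NormedAddCommGroup H] [InnerProductSpace ℂ H] [CompleteSpace H]

/-- The weighted geometric-type mean `A ♮_v B = A^{1/2} (A^{-1/2} B A^{-1/2})^v A^{1/2}`. -/
noncomputable def opNatural (v : ℝ) (A B : H →L[ℂ] H) : H →L[ℂ] H :=
  CFC.sqrt A *
    cfc (fun x : ℝ => x ^ v) (Ring.inverse (CFC.sqrt A) * B * Ring.inverse (CFC.sqrt A)) *
    CFC.sqrt A

/-- Tsallis relative operator entropy `T_v(A|B) = (A ♮_v B - A)/v`. -/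
noncomputable def Tsallis (v : ℝ) (A B : H →L[ℂ] H) : H →L[ℂ] H :=
  v⁻¹ • (opNatural v A B - A)


theorem stmt10 (A B : H →L[ℂ] H) (hA : 0 ≤ A) (hAu : IsUnit A) (hB : 0 ≤ B) (hBu : IsUnit B)
    (J : Set ℝ) (hJ : J ⊆ Set.Ioi 0) (hJA : spectrum ℝ A ⊆ J) (hJB : spectrum ℝ B ⊆ J)
    (v : ℝ) (hv : v ∈ Set.Ico (-1:ℝ) 0 ∪ Set.Ioc (0:ℝ) 1) (t : ℝ) (ht : t ∈ J) :
    ((t ^ v - 1) / v) • A + (opNatural v A B - t • opNatural (v - 1) A B) ≤ Tsallis v A B := by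
  have hvne : v ≠ 0 := by rcases hv with h | h <;> [exact h.2.ne; exact h.1.ne']
  have htpos : 0 < t := hJ ht
  have hS0 : 0 ≤ CFC.sqrt A := CFC.sqrt_nonneg A
  have hSsa : IsSelfAdjoint (CFC.sqrt A) := hS0.isSelfAdjoint
  have hSS : CFC.sqrt A * CFC.sqrt A = A := CFC.sqrt_mul_sqrt_self A hA
  -- `CFC.sqrt A` is a unit
  have h1 : CFC.sqrt A * (CFC.sqrt A * Ring.inverse A) = 1 := by
    rw [← mul_assoc, hSS, Ring.mul_inverse_cancel A hAu]
  have h2 : (Ring.inverse A * CFC.sqrt A) * CFC.sqrt A = 1 := by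
    rw [mul_assoc, hSS, Ring.inverse_mul_cancel A hAu]
  have hbc : Ring.inverse A * CFC.sqrt A = CFC.sqrt A * Ring.inverse A := by
    calc Ring.inverse A * CFC.sqrt A
        = (Ring.inverse A * CFC.sqrt A) * (CFC.sqrt A * (CFC.sqrt A * Ring.inverse A)) := by
          rw [h1, mul_one]
      _ = ((Ring.inverse A * CFC.sqrt A) * CFC.sqrt A) * (CFC.sqrt A * Ring.inverse A) := by
          simp only [mul_assoc]
      _ = CFC.sqrt A * Ring.inverse A := by rw [h2, one_mul]
  have hSu : IsUnit (CFC.sqrt A) :=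
    isUnit_iff_exists.mpr ⟨CFC.sqrt A * Ring.inverse A, h1, by rw [← hbc]; exact h2⟩
  have hiSu : IsUnit (Ring.inverse (CFC.sqrt A)) := by
    obtain ⟨u, hu⟩ := hSu
    rw [← hu, Ring.inverse_unit]
    exact u⁻¹.isUnit
  have hiSsa : star (Ring.inverse (CFC.sqrt A)) = Ring.inverse (CFC.sqrt A) := by
    rw [← Ring.inverse_star, hSsa.star_eq]
  set C := Ring.inverse (CFC.sqrt A) * B * Ring.inverse (CFC.sqrt A) with hCdef
  have hC0 : 0 ≤ C := by
    have := star_left_conjugate_nonneg hB (Ring.inverse (CFC.sqrt A))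
    rwa [hiSsa] at this
  have hCsa : IsSelfAdjoint C := hC0.isSelfAdjoint
  have hCu : IsUnit C := (hiSu.mul hBu).mul hiSu
  have hspec : spectrum ℝ C ⊆ Set.Ioi 0 := by
    intro x hx
    have hx0 : 0 ≤ x := spectrum_nonneg_of_nonneg hC0 hx
    rcases hx0.lt_or_eq with h | h
    · exact h
    · exact absurd hx (h ▸ (spectrum.zero_notMem_iff ℝ).mpr hCu)
  have hcont : ∀ u : ℝ, ContinuousOn (fun x : ℝ => x ^ u) (spectrum ℝ C) := fun u x hx =>
    (Real.continuousAt_rpow_const x u (Or.inl (hspec hx).ne')).continuousWithinAt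
  set h : ℝ → ℝ := fun x => (v⁻¹ - 1) * x ^ v + t * x ^ (v - 1) - t ^ v / v with hhdef
  have hcfc : cfc h C = (v⁻¹ - 1) • cfc (fun x : ℝ => x ^ v) C
      + t • cfc (fun x : ℝ => x ^ (v - 1)) C - (t ^ v / v) • 1 := by
    have c1 : ContinuousOn (fun x : ℝ => (v⁻¹ - 1) * x ^ v) (spectrum ℝ C) :=
      continuousOn_const.mul (hcont v)
    have c2 : ContinuousOn (fun x : ℝ => t * x ^ (v - 1)) (spectrum ℝ C) :=
      continuousOn_const.mul (hcont (v - 1))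
    rw [hhdef]
    rw [cfc_sub (fun x : ℝ => (v⁻¹ - 1) * x ^ v + t * x ^ (v - 1)) (fun _ : ℝ => t ^ v / v) C
        (c1.add c2) continuousOn_const,
      cfc_add C (fun x : ℝ => (v⁻¹ - 1) * x ^ v) (fun x : ℝ => t * x ^ (v - 1)) c1 c2,
      cfc_const_mul _ _ C (hcont v), cfc_const_mul _ _ C (hcont (v - 1)),
      cfc_const _ C hCsa, Algebra.algebraMap_eq_smul_one]
  have hnn : 0 ≤ cfc h C := cfc_nonneg fun x hx => scalar_key hv htpos (hspec hx)
  have hconj : 0 ≤ CFC.sqrt A * cfc h C * CFC.sqrt A := by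
    have := star_left_conjugate_nonneg hnn (CFC.sqrt A)
    rwa [hSsa.star_eq] at this
  rw [← sub_nonneg]
  have keyeq : Tsallis v A B
      - (((t ^ v - 1) / v) • A + (opNatural v A B - t • opNatural (v - 1) A B))
      = CFC.sqrt A * cfc h C * CFC.sqrt A := by
    simp only [Tsallis, opNatural, ← hCdef, hcfc]
    simp only [mul_add, add_mul, mul_sub, sub_mul, mul_smul_comm, smul_mul_assoc, mul_one,
      smul_sub, smul_add, smul_smul, hSS]
    match_scalars <;> field_simp <;> ring
  rw [keyeq]
  exact hconj
end
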